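/- arXiv:2106.14283 — 3 statements merged into one kernel-verified Lean document; each statement's English description precedes it below -/
import Mathlib

section
/- For 0<q<1 and ν>-1, the normalized q-Bessel function satisfies the bound |j_ν(q^n, q²)| ≤ C for n ≥ 0 and |j_ν(q^n, q²)| ≤ C·q^{n²-(2ν+1)n} for n < 0, where C = (-q²;q²)_∞ (-q^{2ν+2};q²)_∞ / (q^{2ν+2};q²)_∞. -/
open scoped BigOperators
noncomputable section

/-- Infinite q-Pochhammer symbol `(a;q)_∞`. -/
def qPochInf (a q : ℝ) : ℝ := ∏' k : ℕ, (1 - a * q ^ k)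

/-- Finite q-Pochhammer symbol `(a;q)_n`. -/
def qPochFin (a q : ℝ) (n : ℕ) : ℝ := ∏ k ∈ Finset.range n, (1 - a * q ^ k)

/-- Normalized q-Bessel function `j_ν(x, q²)`. -/
def jnu (q ν x : ℝ) : ℝ :=
  ∑' n : ℕ, (-1 : ℝ) ^ n * q ^ (n * (n + 1)) * x ^ (2 * n) /
    (qPochFin (q ^ (2 * ν + 2)) (q ^ 2) n * qPochFin (q ^ 2) (q ^ 2) n)

/-- q-Jackson integral on `(0,∞)`. -/
def qInt (q : ℝ) (f : ℝ → ℝ) : ℝ := (1 - q) * ∑' n : ℤ, q ^ n * f (q ^ n)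

/-- The constant `c_{q,ν}`. -/
def cq (q ν : ℝ) : ℝ :=
  qPochInf (q ^ (2 * ν + 2)) (q ^ 2) / ((1 - q) * qPochInf (q ^ 2) (q ^ 2))

/-- q-Bessel Fourier transform `F_{q,ν}`. -/
def qFT (q ν : ℝ) (f : ℝ → ℝ) (x : ℝ) : ℝ :=
  cq q ν * qInt q (fun t => f t * jnu q ν (x * t) * t ^ (2 * ν + 1))

/-- Membership in `L^p_{q,ν}` (summability of the defining q-integral). -/
def qMemLp (q ν p : ℝ) (f : ℝ → ℝ) : Prop :=
  Summable (fun n : ℤ => q ^ n * |f (q ^ n)| ^ p * ((q : ℝ) ^ n) ^ (2 * ν + 1))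

/-- The norm `‖f‖_{q,p,ν}`. -/
def qNorm (q ν p : ℝ) (f : ℝ → ℝ) : ℝ :=
  (qInt q (fun x => |f x| ^ p * x ^ (2 * ν + 1))) ^ (1 / p)

/-- Inner product `⟨f,g⟩_{q,ν}`. -/
def qInner (q ν : ℝ) (f g : ℝ → ℝ) : ℝ :=
  qInt q (fun x => f x * g x * x ^ (2 * ν + 1))

/-- q-translation operator `T^ν_{q,x}`. -/
def qTrans (q ν x : ℝ) (f : ℝ → ℝ) (y : ℝ) : ℝ :=
  cq q ν * qInt q (fun t => qFT q ν f t * jnu q ν (y * t) * jnu q ν (x * t) * t ^ (2 * ν + 1))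

/-- q-convolution product `f *_q g = F_{q,ν}[F_{q,ν}f × F_{q,ν}g]`. -/
def qConv (q ν : ℝ) (f g : ℝ → ℝ) : ℝ → ℝ :=
  qFT q ν (fun t => qFT q ν f t * qFT q ν g t)

/-- q-Bessel operator `Δ_{q,ν}`. -/
def qBesselOp (q ν : ℝ) (f : ℝ → ℝ) (x : ℝ) : ℝ :=
  (f (x / q) - (1 + q ^ (2 * ν)) * f x + q ^ (2 * ν) * f (q * x)) / x ^ 2

/-!
Write `Q = q²`, `A = q^(2ν+2)` and `z = q²x²`, so that
`j_ν(x, q²) = ∑ₖ (-1)^k Q^(k choose 2) z^k / ((A;Q)_k (Q;Q)_k)`. By Euler's identity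
`(x;Q)_∞ = ∑ₘ (-1)^m Q^(m choose 2) x^m / (Q;Q)_m`, such alternating sums are dominated by
`(-|x|;Q)_∞`; as `(A;Q)_k ≥ (A;Q)_∞`, this bounds `j_ν` by `(-Q;Q)_∞ / (A;Q)_∞` when `|x| ≤ 1`.

For `x = q^(-p)` that bound grows too fast. Instead, multiplying by `(A;Q)_∞` turns `1 / (A;Q)_k`
into `(AQ^k;Q)_∞`, and expanding that by Euler gives a double series symmetric under
`(z, k) ↔ (A, m)`. Summing in the other order,
`(A;Q)_∞ j_ν = ∑ₘ (-1)^m Q^(m choose 2) A^m (zQ^m;Q)_∞ / (Q;Q)_m`. Since `z = Q^(1-p)`, the first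
`p` products contain a zero factor, and the remaining terms are dominated by
`Q^(p choose 2) A^p = q^(n² - (2ν+1)n)` times the Euler terms of `(-A;Q)_∞`.
-/

open Filter Topology Finset

theorem Nat.add_choose_two (a b : ℕ) : (a + b).choose 2 = a.choose 2 + b.choose 2 + a * b := by
  induction b with
  | zero => simp
  | succ b ih =>
    rw [← add_assoc, Nat.choose_succ_succ', ih, Nat.choose_succ_succ', Nat.choose_one_right,
      Nat.choose_one_right]
    ring

section QPochhammer

variable {x Q : ℝ}

theorem qPochFin_succ (x Q : ℝ) (n : ℕ) :
    qPochFin x Q (n + 1) = qPochFin x Q n * (1 - x * Q ^ n) :=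
  prod_range_succ _ _

theorem qPochFin_pos (hQ0 : 0 ≤ Q) (hQ1 : Q ≤ 1) (hx : x < 1) (n : ℕ) : 0 < qPochFin x Q n := by
  refine prod_pos fun k _ => sub_pos.2 ?_
  rcases le_or_gt x 0 with h | h
  · exact (mul_nonpos_of_nonpos_of_nonneg h (pow_nonneg hQ0 k)).trans_lt one_pos
  · exact (mul_le_of_le_one_right h.le (pow_le_one₀ hQ0 hQ1)).trans_lt hx

theorem qPochFin_le_one (hQ0 : 0 ≤ Q) (hQ1 : Q ≤ 1) (hx0 : 0 ≤ x) (hx1 : x ≤ 1) (n : ℕ) :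
    qPochFin x Q n ≤ 1 :=
  prod_le_one (fun k _ => sub_nonneg.2 <| mul_le_one₀ hx1 (pow_nonneg hQ0 k) (pow_le_one₀ hQ0 hQ1))
    fun k _ => sub_le_self _ <| mul_nonneg hx0 (pow_nonneg hQ0 k)

theorem multipliable_one_sub_mul_pow (hQ : |Q| < 1) (x : ℝ) : Multipliable fun k : ℕ => 1 - x * Q ^ k := by
  simpa only [sub_eq_add_neg] using
    Real.multipliable_one_add_of_summable ((summable_geometric_of_abs_lt_one hQ).mul_left x).neg

theorem tendsto_qPochFin (hQ : |Q| < 1) (x : ℝ) :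
    Tendsto (qPochFin x Q) atTop (𝓝 (qPochInf x Q)) :=
  (multipliable_one_sub_mul_pow hQ x).hasProd.tendsto_prod_nat

theorem qPochInf_le_one (hQ0 : 0 ≤ Q) (hQ1 : Q < 1) (hx0 : 0 ≤ x) (hx1 : x ≤ 1) :
    qPochInf x Q ≤ 1 :=
  le_of_tendsto' (tendsto_qPochFin (abs_lt.2 ⟨by linarith, hQ1⟩) x)
    (qPochFin_le_one hQ0 hQ1.le hx0 hx1)

theorem one_le_qPochInf_neg (hQ0 : 0 ≤ Q) (hQ1 : Q < 1) {y : ℝ} (hy : 0 ≤ y) :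
    1 ≤ qPochInf (-y) Q :=
  ge_of_tendsto' (tendsto_qPochFin (abs_lt.2 ⟨by linarith, hQ1⟩) _) fun _ =>
    one_le_prod fun k _ => by nlinarith [pow_nonneg hQ0 k]

theorem qPochInf_neg_mono (hQ0 : 0 ≤ Q) (hQ1 : Q < 1) {y z : ℝ} (hy : 0 ≤ y) (hyz : y ≤ z) :
    qPochInf (-y) Q ≤ qPochInf (-z) Q :=
  have hQ : |Q| < 1 := abs_lt.2 ⟨by linarith, hQ1⟩
  le_of_tendsto_of_tendsto' (tendsto_qPochFin hQ _) (tendsto_qPochFin hQ _) fun _ =>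
    prod_le_prod (fun k _ => by nlinarith [pow_nonneg hQ0 k])
      fun k _ => by nlinarith [pow_nonneg hQ0 k]

theorem qPochInf_eq_zero {k : ℕ} (hk : x * Q ^ k = 1) : qPochInf x Q = 0 :=
  tprod_of_exists_eq_zero ⟨k, by rw [hk, sub_self]⟩

end QPochhammer

def eulerTerm (Q x : ℝ) (m : ℕ) : ℝ := (-1) ^ m * Q ^ m.choose 2 * x ^ m / qPochFin Q Q m

section Euler

variable {Q : ℝ}

theorem eulerTerm_zero (Q x : ℝ) : eulerTerm Q x 0 = 1 := by
  simp [eulerTerm, qPochFin]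

theorem eulerTerm_succ (Q x : ℝ) (m : ℕ) :
    eulerTerm Q x (m + 1) = -(x * Q ^ m) / (1 - Q * Q ^ m) * eulerTerm Q x m := by
  rw [eulerTerm, eulerTerm, qPochFin_succ, Nat.add_choose_two]
  simp only [Nat.choose_succ_self, mul_one, add_zero, pow_add, pow_succ, div_eq_mul_inv, mul_inv]
  ring

theorem eulerTerm_neg (Q y : ℝ) (m : ℕ) :
    eulerTerm Q (-y) m = Q ^ m.choose 2 * y ^ m / qPochFin Q Q m := by
  have h : ((-1 : ℝ) ^ m) * (-1) ^ m = 1 := by rw [← mul_pow]; norm_num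
  rw [eulerTerm, neg_pow y]
  linear_combination Q ^ m.choose 2 * y ^ m / qPochFin Q Q m * h

theorem eulerTerm_neg_nonneg (hQ0 : 0 ≤ Q) (hQ1 : Q < 1) {y : ℝ} (hy : 0 ≤ y) (m : ℕ) :
    0 ≤ eulerTerm Q (-y) m := by
  rw [eulerTerm_neg]
  have := qPochFin_pos hQ0 hQ1.le hQ1 m
  positivity

theorem abs_eulerTerm (hQ0 : 0 ≤ Q) (hQ1 : Q < 1) (x : ℝ) (m : ℕ) :
    |eulerTerm Q x m| = eulerTerm Q (-|x|) m := by
  rw [eulerTerm_neg, eulerTerm, abs_div, abs_mul, abs_mul, abs_pow, abs_pow, abs_pow, abs_neg,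
    abs_one, one_pow, one_mul, abs_of_nonneg hQ0, abs_of_pos (qPochFin_pos hQ0 hQ1.le hQ1 m)]

theorem abs_eulerTerm_mul_pow_le (hQ0 : 0 ≤ Q) (hQ1 : Q < 1) (x : ℝ) (N m : ℕ) :
    |eulerTerm Q (x * Q ^ N) m| ≤ eulerTerm Q (-|x|) m := by
  have hxQ : |x * Q ^ N| ≤ |x| := by
    rw [abs_mul, abs_pow, abs_of_nonneg hQ0]
    exact mul_le_of_le_one_right (abs_nonneg x) (pow_le_one₀ hQ0 hQ1.le)
  rw [abs_eulerTerm hQ0 hQ1, eulerTerm_neg, eulerTerm_neg]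
  have := qPochFin_pos hQ0 hQ1.le hQ1 m
  gcongr

theorem summable_eulerTerm (hQ0 : 0 ≤ Q) (hQ1 : Q < 1) (x : ℝ) : Summable (eulerTerm Q x) := by
  have hlim : Tendsto (fun m : ℕ => |x| * Q ^ m / (1 - Q)) atTop (𝓝 0) := by
    simpa using ((tendsto_pow_atTop_nhds_zero_of_lt_one hQ0 hQ1).const_mul |x|).div_const (1 - Q)
  refine summable_of_ratio_norm_eventually_le (r := 1 / 2) (by norm_num) ?_
  filter_upwards [hlim.eventually_le_const (by norm_num : (0 : ℝ) < 1 / 2)] with m hm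
  rw [eulerTerm_succ, norm_mul]
  gcongr
  have hQm : Q * Q ^ m ≤ Q := mul_le_of_le_one_right hQ0 (pow_le_one₀ hQ0 hQ1.le)
  calc ‖-(x * Q ^ m) / (1 - Q * Q ^ m)‖ = |x| * Q ^ m / (1 - Q * Q ^ m) := by
        rw [Real.norm_eq_abs, abs_div, abs_neg, abs_mul, abs_of_nonneg (pow_nonneg hQ0 m),
          abs_of_pos (show 0 < 1 - Q * Q ^ m by linarith)]
    _ ≤ |x| * Q ^ m / (1 - Q) := by gcongr
    _ ≤ 1 / 2 := hm

theorem eulerTerm_succ_sub (hQ0 : 0 ≤ Q) (hQ1 : Q < 1) (x : ℝ) (m : ℕ) :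
    eulerTerm Q x (m + 1) - eulerTerm Q (Q * x) (m + 1) = -x * eulerTerm Q (Q * x) m := by
  have hm : 1 - Q * Q ^ m ≠ 0 := by
    nlinarith [mul_le_of_le_one_right hQ0 (pow_le_one₀ hQ0 hQ1.le (n := m))]
  simp only [eulerTerm, qPochFin_succ, Nat.add_choose_two, Nat.choose_succ_self, mul_one, add_zero,
    div_eq_mul_inv, mul_inv]
  linear_combination
    -((-1) ^ m * Q ^ m.choose 2 * Q ^ m * x ^ (m + 1) / qPochFin Q Q m) * mul_inv_cancel₀ hm

theorem tsum_eulerTerm_eq_mul (hQ0 : 0 ≤ Q) (hQ1 : Q < 1) (x : ℝ) :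
    ∑' m, eulerTerm Q x m = (1 - x) * ∑' m, eulerTerm Q (Q * x) m := by
  have hx := summable_eulerTerm hQ0 hQ1 x
  have hQx := summable_eulerTerm hQ0 hQ1 (Q * x)
  have hdiff : ∑' m, eulerTerm Q x m - ∑' m, eulerTerm Q (Q * x) m =
      -x * ∑' m, eulerTerm Q (Q * x) m := by
    rw [← hx.tsum_sub hQx, (hx.sub hQx).tsum_eq_zero_add]
    simp only [eulerTerm_zero, sub_self, zero_add, eulerTerm_succ_sub hQ0 hQ1,
      tsum_mul_left]
  linarith

theorem tsum_eulerTerm_eq_qPochFin_mul (hQ0 : 0 ≤ Q) (hQ1 : Q < 1) (x : ℝ) (N : ℕ) :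
    ∑' m, eulerTerm Q x m = qPochFin x Q N * ∑' m, eulerTerm Q (x * Q ^ N) m := by
  induction N with
  | zero => simp [qPochFin]
  | succ N ih =>
    rw [ih, tsum_eulerTerm_eq_mul hQ0 hQ1 (x * Q ^ N), qPochFin_succ, pow_succ]
    ring_nf

theorem tendsto_tsum_eulerTerm_mul_pow (hQ0 : 0 ≤ Q) (hQ1 : Q < 1) (x : ℝ) :
    Tendsto (fun N : ℕ => ∑' m, eulerTerm Q (x * Q ^ N) m) atTop (𝓝 1) := by
  have hzero : ∑' m, eulerTerm Q 0 m = 1 := by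
    rw [tsum_eq_single 0 fun m hm => by simp [eulerTerm, zero_pow hm], eulerTerm_zero]
  rw [← hzero]
  refine tendsto_tsum_of_dominated_convergence (summable_eulerTerm hQ0 hQ1 (-|x|)) (fun m => ?_)
    (Eventually.of_forall fun N m => abs_eulerTerm_mul_pow_le hQ0 hQ1 x N m)
  have hcont : Continuous fun y => eulerTerm Q y m := by unfold eulerTerm; fun_prop
  have hxQ := (tendsto_pow_atTop_nhds_zero_of_lt_one hQ0 hQ1).const_mul x
  rw [mul_zero] at hxQ
  exact (hcont.tendsto 0).comp hxQ

theorem tendsto_qPochFin_tsum_eulerTerm (hQ0 : 0 ≤ Q) (hQ1 : Q < 1) (x : ℝ) :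
    Tendsto (qPochFin x Q) atTop (𝓝 (∑' m, eulerTerm Q x m)) := by
  have h := tendsto_tsum_eulerTerm_mul_pow hQ0 hQ1 x
  have hdiv := (tendsto_const_nhds (x := ∑' m, eulerTerm Q x m)).div h one_ne_zero
  rw [div_one] at hdiv
  refine hdiv.congr' ?_
  filter_upwards [h.eventually_ne one_ne_zero] with N hN
  show (∑' m, eulerTerm Q x m) / _ = _
  rw [tsum_eulerTerm_eq_qPochFin_mul hQ0 hQ1 x N, mul_div_cancel_right₀ _ hN]

theorem hasSum_eulerTerm (hQ0 : 0 ≤ Q) (hQ1 : Q < 1) (x : ℝ) :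
    HasSum (eulerTerm Q x) (qPochInf x Q) := by
  convert (summable_eulerTerm hQ0 hQ1 x).hasSum
  exact tendsto_nhds_unique (tendsto_qPochFin (abs_lt.2 ⟨by linarith, hQ1⟩) x)
    (tendsto_qPochFin_tsum_eulerTerm hQ0 hQ1 x)

theorem qPochInf_eq_tsum_eulerTerm (hQ0 : 0 ≤ Q) (hQ1 : Q < 1) (x : ℝ) :
    qPochInf x Q = ∑' m, eulerTerm Q x m :=
  (hasSum_eulerTerm hQ0 hQ1 x).tsum_eq.symm

end Euler

section QPochhammerInf

variable {x Q : ℝ}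

theorem qPochInf_eq_qPochFin_mul (hQ0 : 0 ≤ Q) (hQ1 : Q < 1) (x : ℝ) (N : ℕ) :
    qPochInf x Q = qPochFin x Q N * qPochInf (x * Q ^ N) Q := by
  simp only [qPochInf_eq_tsum_eulerTerm hQ0 hQ1]
  exact tsum_eulerTerm_eq_qPochFin_mul hQ0 hQ1 x N

theorem qPochInf_pos (hQ0 : 0 ≤ Q) (hQ1 : Q < 1) (hx : x < 1) : 0 < qPochInf x Q := by
  obtain ⟨N, hN⟩ := ((tendsto_tsum_eulerTerm_mul_pow hQ0 hQ1 x).eventually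
    (eventually_gt_nhds one_pos)).exists
  rw [qPochInf_eq_qPochFin_mul hQ0 hQ1 x N, qPochInf_eq_tsum_eulerTerm hQ0 hQ1]
  exact mul_pos (qPochFin_pos hQ0 hQ1.le hx N) hN

theorem qPochInf_le_qPochFin (hQ0 : 0 ≤ Q) (hQ1 : Q < 1) (hx0 : 0 ≤ x) (hx1 : x < 1) (N : ℕ) :
    qPochInf x Q ≤ qPochFin x Q N := by
  rw [qPochInf_eq_qPochFin_mul hQ0 hQ1 x N]
  exact mul_le_of_le_one_right (qPochFin_pos hQ0 hQ1.le hx1 N).le <|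
    qPochInf_le_one hQ0 hQ1 (mul_nonneg hx0 (pow_nonneg hQ0 N))
      (mul_le_one₀ hx1.le (pow_nonneg hQ0 N) (pow_le_one₀ hQ0 hQ1.le))

end QPochhammerInf

section Heine

variable {Q : ℝ}

theorem eulerTerm_mul_eulerTerm_mul_pow_comm (Q a b : ℝ) (k m : ℕ) :
    eulerTerm Q a k * eulerTerm Q (b * Q ^ k) m = eulerTerm Q b m * eulerTerm Q (a * Q ^ m) k := by
  simp only [eulerTerm, mul_pow, ← pow_mul]
  ring

theorem tsum_eulerTerm_mul_qPochInf_comm (hQ0 : 0 ≤ Q) (hQ1 : Q < 1) (a b : ℝ) :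
    ∑' k, eulerTerm Q a k * qPochInf (b * Q ^ k) Q =
      ∑' m, eulerTerm Q b m * qPochInf (a * Q ^ m) Q := by
  set F : ℕ → ℕ → ℝ := fun k m => eulerTerm Q a k * eulerTerm Q (b * Q ^ k) m with hF
  have hsum : Summable (Function.uncurry F) := by
    refine .of_norm_bounded ((summable_eulerTerm hQ0 hQ1 (-|a|)).mul_of_nonneg
      (summable_eulerTerm hQ0 hQ1 (-|b|)) (eulerTerm_neg_nonneg hQ0 hQ1 (abs_nonneg a))
      (eulerTerm_neg_nonneg hQ0 hQ1 (abs_nonneg b))) fun ⟨k, m⟩ => ?_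
    rw [Function.uncurry_apply_pair, hF, Real.norm_eq_abs, abs_mul, abs_eulerTerm hQ0 hQ1]
    exact mul_le_mul_of_nonneg_left (abs_eulerTerm_mul_pow_le hQ0 hQ1 b k m)
      (eulerTerm_neg_nonneg hQ0 hQ1 (abs_nonneg a) k)
  calc ∑' k, eulerTerm Q a k * qPochInf (b * Q ^ k) Q = ∑' k, ∑' m, F k m := by
        simp only [hF, qPochInf_eq_tsum_eulerTerm hQ0 hQ1, tsum_mul_left]
    _ = ∑' m, ∑' k, F k m := hsum.tsum_comm.symm
    _ = ∑' m, eulerTerm Q b m * qPochInf (a * Q ^ m) Q := by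
        simp only [hF, eulerTerm_mul_eulerTerm_mul_pow_comm Q a b, qPochInf_eq_tsum_eulerTerm hQ0 hQ1,
          tsum_mul_left]

theorem qPochInf_mul_tsum_eulerTerm_div (hQ0 : 0 ≤ Q) (hQ1 : Q < 1) {A : ℝ} (hA : A < 1) (z : ℝ) :
    qPochInf A Q * ∑' k, eulerTerm Q z k / qPochFin A Q k =
      ∑' k, eulerTerm Q z k * qPochInf (A * Q ^ k) Q := by
  rw [← tsum_mul_left]
  refine tsum_congr fun k => ?_
  rw [qPochInf_eq_qPochFin_mul hQ0 hQ1 A k]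
  field_simp [(qPochFin_pos hQ0 hQ1.le hA k).ne']

end Heine

section Bounds

variable {Q A : ℝ}

theorem abs_tsum_eulerTerm_div_qPochFin_le (hQ0 : 0 ≤ Q) (hQ1 : Q < 1) (hA0 : 0 ≤ A) (hA1 : A < 1)
    (z : ℝ) : |∑' k, eulerTerm Q z k / qPochFin A Q k| ≤ qPochInf (-|z|) Q / qPochInf A Q := by
  rw [← Real.norm_eq_abs]
  refine tsum_of_norm_bounded ((hasSum_eulerTerm hQ0 hQ1 (-|z|)).div_const _) fun k => ?_
  rw [Real.norm_eq_abs, abs_div, abs_eulerTerm hQ0 hQ1, abs_of_pos (qPochFin_pos hQ0 hQ1.le hA1 k)]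
  exact div_le_div_of_nonneg_left (eulerTerm_neg_nonneg hQ0 hQ1 (abs_nonneg z) k)
    (qPochInf_pos hQ0 hQ1 hA1) (qPochInf_le_qPochFin hQ0 hQ1 hA0 hA1 k)

theorem abs_eulerTerm_add_mul_qPochInf_le (hQ0 : 0 ≤ Q) (hQ1 : Q < 1) (hA : 0 ≤ A) (i p : ℕ) :
    |eulerTerm Q A (i + p) * qPochInf (Q * Q ^ i) Q| ≤
      Q ^ p.choose 2 * A ^ p * eulerTerm Q (-A) i := by
  have hPi := qPochFin_pos hQ0 hQ1.le hQ1 i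
  have hPip := qPochFin_pos hQ0 hQ1.le hQ1 (i + p)
  have hQi : qPochInf (Q * Q ^ i) Q * qPochFin Q Q i ≤ qPochFin Q Q (i + p) := by
    rw [mul_comm, ← qPochInf_eq_qPochFin_mul hQ0 hQ1]
    exact qPochInf_le_qPochFin hQ0 hQ1 hQ0 hQ1 _
  have hQi0 : 0 ≤ qPochInf (Q * Q ^ i) Q :=
    (qPochInf_pos hQ0 hQ1 ((mul_le_of_le_one_right hQ0 (pow_le_one₀ hQ0 hQ1.le)).trans_lt hQ1)).le
  have hexp : Q ^ (i + p).choose 2 ≤ Q ^ (i.choose 2 + p.choose 2) :=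
    pow_le_pow_of_le_one hQ0 hQ1.le (by rw [Nat.add_choose_two]; omega)
  rw [abs_mul, abs_eulerTerm hQ0 hQ1, abs_of_nonneg hA, abs_of_nonneg hQi0, eulerTerm_neg,
    eulerTerm_neg]
  calc Q ^ (i + p).choose 2 * A ^ (i + p) / qPochFin Q Q (i + p) * qPochInf (Q * Q ^ i) Q
      = Q ^ (i + p).choose 2 * A ^ (i + p) * (qPochInf (Q * Q ^ i) Q / qPochFin Q Q (i + p)) := by
        ring
    _ ≤ Q ^ (i.choose 2 + p.choose 2) * A ^ (i + p) * (1 / qPochFin Q Q i) := by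
        gcongr ?_ * _ * ?_
        rw [div_le_div_iff₀ hPip hPi]
        linarith
    _ = Q ^ p.choose 2 * A ^ p * (Q ^ i.choose 2 * A ^ i / qPochFin Q Q i) := by
        rw [pow_add, pow_add]
        ring

theorem abs_tsum_eulerTerm_mul_qPochInf_le (hQ0 : 0 < Q) (hQ1 : Q < 1) (hA : 0 ≤ A) {z : ℝ}
    {p : ℕ} (hz : z * Q ^ p = Q) :
    |∑' m, eulerTerm Q A m * qPochInf (z * Q ^ m) Q| ≤ Q ^ p.choose 2 * A ^ p * qPochInf (-A) Q := by
  have hvanish (m : ℕ) (hm : m < p) : qPochInf (z * Q ^ m) Q = 0 := by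
    refine qPochInf_eq_zero (k := p - 1 - m) (mul_right_cancel₀ hQ0.ne' ?_)
    calc z * Q ^ m * Q ^ (p - 1 - m) * Q = z * Q ^ (m + (p - 1 - m) + 1) := by ring
      _ = 1 * Q := by rw [show m + (p - 1 - m) + 1 = p by omega, hz, one_mul]
  have hshift (i : ℕ) : z * Q ^ (i + p) = Q * Q ^ i := by
    rw [pow_add, mul_left_comm, hz, mul_comm]
  have hbound : HasSum (fun i => Q ^ p.choose 2 * A ^ p * eulerTerm Q (-A) i)
      (Q ^ p.choose 2 * A ^ p * qPochInf (-A) Q) :=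
    (hasSum_eulerTerm hQ0.le hQ1 (-A)).mul_left _
  have htail (i : ℕ) : ‖eulerTerm Q A (i + p) * qPochInf (z * Q ^ (i + p)) Q‖ ≤
      Q ^ p.choose 2 * A ^ p * eulerTerm Q (-A) i := by
    rw [hshift, Real.norm_eq_abs]
    exact abs_eulerTerm_add_mul_qPochInf_le hQ0.le hQ1 hA i p
  have hsum : Summable fun m => eulerTerm Q A m * qPochInf (z * Q ^ m) Q :=
    (summable_nat_add_iff p).1 (hbound.summable.of_norm_bounded htail)
  rw [← hsum.sum_add_tsum_nat_add p,
    sum_eq_zero fun m hm => by rw [hvanish m (mem_range.1 hm), mul_zero], zero_add,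
    ← Real.norm_eq_abs]
  exact tsum_of_norm_bounded hbound htail

theorem abs_tsum_eulerTerm_div_qPochFin_le_of_mul_pow_eq (hQ0 : 0 < Q) (hQ1 : Q < 1) (hA0 : 0 ≤ A)
    (hA1 : A < 1) {z : ℝ} {p : ℕ} (hz : z * Q ^ p = Q) :
    |∑' k, eulerTerm Q z k / qPochFin A Q k| ≤
      Q ^ p.choose 2 * A ^ p * qPochInf (-A) Q / qPochInf A Q := by
  have hApos := qPochInf_pos hQ0.le hQ1 hA1
  rw [le_div_iff₀ hApos, ← abs_of_pos hApos, ← abs_mul, mul_comm,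
    qPochInf_mul_tsum_eulerTerm_div hQ0.le hQ1 hA1, tsum_eulerTerm_mul_qPochInf_comm hQ0.le hQ1]
  exact abs_tsum_eulerTerm_mul_qPochInf_le hQ0 hQ1 hA0 hz

end Bounds

theorem jnu_eq_tsum_eulerTerm_div (q ν x : ℝ) :
    jnu q ν x = ∑' k, eulerTerm (q ^ 2) (q ^ 2 * x ^ 2) k / qPochFin (q ^ (2 * ν + 2)) (q ^ 2) k := by
  refine tsum_congr fun k => ?_
  have hk : k * (k + 1) = 2 * k.choose 2 + 2 * k := by
    induction k with
    | zero => rfl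
    | succ k ih =>
      rw [Nat.add_choose_two, Nat.choose_succ_self]
      linarith
  rw [eulerTerm, div_div, mul_comm (qPochFin (q ^ 2) _ _), hk]
  ring

theorem pow_choose_two_mul_rpow_pow {q : ℝ} (hq : 0 < q) (ν : ℝ) (p : ℕ) :
    (q ^ 2) ^ p.choose 2 * (q ^ (2 * ν + 2)) ^ p = q ^ ((p : ℝ) ^ 2 + (2 * ν + 1) * p) := by
  rw [← pow_mul, ← Real.rpow_natCast, ← Real.rpow_natCast (q ^ (2 * ν + 2)),
    ← Real.rpow_mul hq.le, ← Real.rpow_add hq]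
  congr 1
  push_cast [Nat.cast_choose_two]
  ring

theorem q_bessel_bound (q ν : ℝ) (hq : 0 < q) (hq1 : q < 1) (hν : -1 < ν) (n : ℤ) :
    (0 ≤ n → |jnu q ν (q ^ n)| ≤
      qPochInf (-(q ^ 2)) (q ^ 2) * qPochInf (-(q ^ (2 * ν + 2))) (q ^ 2) /
        qPochInf (q ^ (2 * ν + 2)) (q ^ 2)) ∧
    (n < 0 → |jnu q ν (q ^ n)| ≤
      qPochInf (-(q ^ 2)) (q ^ 2) * qPochInf (-(q ^ (2 * ν + 2))) (q ^ 2) /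
        qPochInf (q ^ (2 * ν + 2)) (q ^ 2) * q ^ ((n : ℝ) ^ 2 - (2 * ν + 1) * (n : ℝ))) := by
  set Q := q ^ 2
  set A := q ^ (2 * ν + 2)
  have hQ0 : 0 < Q := by positivity
  have hQ1 : Q < 1 := pow_lt_one₀ hq.le hq1 two_ne_zero
  have hA0 : 0 ≤ A := Real.rpow_nonneg hq.le _
  have hA1 : A < 1 := Real.rpow_lt_one hq.le hq1 (by linarith)
  have hApos := qPochInf_pos hQ0.le hQ1 hA1
  have hQ' := one_le_qPochInf_neg hQ0.le hQ1 hQ0.le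
  have hA' := one_le_qPochInf_neg hQ0.le hQ1 hA0
  rw [jnu_eq_tsum_eulerTerm_div]
  refine ⟨fun hn => ?_, fun hn => ?_⟩
  · have hz : |Q * (q ^ n) ^ 2| ≤ Q := by
      rw [abs_of_nonneg (by positivity)]
      exact mul_le_of_le_one_right hQ0.le (pow_le_one₀ (by positivity) (zpow_le_one₀ hq hq1.le hn))
    calc _ ≤ qPochInf (-|Q * (q ^ n) ^ 2|) Q / qPochInf A Q :=
          abs_tsum_eulerTerm_div_qPochFin_le hQ0.le hQ1 hA0 hA1 _
      _ ≤ _ := by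
          gcongr
          exact (qPochInf_neg_mono hQ0.le hQ1 (abs_nonneg _) hz).trans
            (le_mul_of_one_le_right (by linarith) hA')
  · obtain ⟨p, rfl⟩ : ∃ p : ℕ, n = -p := ⟨n.natAbs, by omega⟩
    have hz : Q * (q ^ (-p : ℤ)) ^ 2 * Q ^ p = Q := by
      simp only [Q, zpow_neg, zpow_natCast]
      field_simp
      ring
    have hexp : ((-p : ℤ) : ℝ) ^ 2 - (2 * ν + 1) * ((-p : ℤ) : ℝ) = (p : ℝ) ^ 2 + (2 * ν + 1) * p := by
      push_cast
      ring
    calc _ ≤ Q ^ p.choose 2 * A ^ p * qPochInf (-A) Q / qPochInf A Q :=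
          abs_tsum_eulerTerm_div_qPochFin_le_of_mul_pow_eq hQ0 hQ1 hA0 hA1 hz
      _ ≤ _ := by
          rw [hexp, ← pow_choose_two_mul_rpow_pow hq, mul_div_assoc, mul_comm]
          gcongr
          exact le_mul_of_one_le_left (by linarith) hQ'
end
end

section
/- The function P_{x_r}(x,t) = c_{q,ν}² ∫_0^∞ e^{-t y²} j_ν(xy,q²) j_ν(x_r y,q²) y^{2ν+1} d_q y satisfies the q-Fokker–Planck equation ∂P_{x_r}(x,t)/∂t = Δ_{q,ν} P_{x_r}(x,t) for all x ∈ R_q and t > 0. -/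
open scoped BigOperators
noncomputable section

/-!
`P(x, t)` is a Jackson integral over `y` of `e^{-t y²} j_ν(xy) j_ν(x_r y) y^{2ν+1}`.
Differentiating under the integral sign in `t` multiplies the integrand by `-y²`. Since
`Δ_{q,ν}` is a three-point difference operator, it commutes with the Jackson sum. The
recursion of the coefficients makes `x ↦ j_ν(xy)` an eigenfunction of `Δ_{q,ν}` with
eigenvalue `-y²`. Both interchanges are justified by domination: the coefficients of `j_ν`
decay like `q^{k²}`, faster than `ε^k / k!` for every `ε > 0`, so `|j_ν(x)| ≤ C_ε e^{ε x²}`,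
and the Gaussian factor absorbs this growth.
-/

open Filter Topology Nat

variable {q ν : ℝ}

lemma hasDerivAt_qInt {F F' : ℝ → ℝ → ℝ} {U : Set ℝ} {s₀ : ℝ} {u : ℤ → ℝ}
    (hU : IsOpen U) (hU' : IsPreconnected U) (hs₀ : s₀ ∈ U)
    (hF : ∀ (n : ℤ), ∀ s ∈ U, HasDerivAt (fun s => F s (q ^ n)) (F' s (q ^ n)) s)
    (hu : Summable u) (hF' : ∀ (n : ℤ), ∀ s ∈ U, |q ^ n * F' s (q ^ n)| ≤ u n)
    (hF₀ : Summable fun n : ℤ => q ^ n * F s₀ (q ^ n)) :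
    HasDerivAt (fun s => qInt q (F s)) (qInt q (F' s₀)) s₀ :=
  (hasDerivAt_tsum_of_isPreconnected hu hU hU' (fun n s hs => (hF n s hs).const_mul _) hF' hs₀
    hF₀ hs₀).const_mul _

lemma qBesselOp_qInt {F : ℝ → ℝ → ℝ} {x : ℝ}
    (h₁ : Summable fun n : ℤ => q ^ n * F (x / q) (q ^ n))
    (h₂ : Summable fun n : ℤ => q ^ n * F x (q ^ n))
    (h₃ : Summable fun n : ℤ => q ^ n * F (q * x) (q ^ n)) :
    qBesselOp q ν (fun x => qInt q (F x)) x
      = qInt q fun y => qBesselOp q ν (fun x => F x y) x := by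
  have hsum := ((h₁.hasSum.sub (h₂.hasSum.mul_left (1 + q ^ (2 * ν)))).add
    (h₃.hasSum.mul_left (q ^ (2 * ν)))).div_const (x ^ 2)
  have key : ∑' n : ℤ, q ^ n * ((F (x / q) (q ^ n) - (1 + q ^ (2 * ν)) * F x (q ^ n)
      + q ^ (2 * ν) * F (q * x) (q ^ n)) / x ^ 2) = (∑' n : ℤ, q ^ n * F (x / q) (q ^ n)
      - (1 + q ^ (2 * ν)) * ∑' n : ℤ, q ^ n * F x (q ^ n)
      + q ^ (2 * ν) * ∑' n : ℤ, q ^ n * F (q * x) (q ^ n)) / x ^ 2 := by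
    rw [← hsum.tsum_eq]; exact tsum_congr fun n => by ring
  simp only [qBesselOp, qInt]
  rw [key]
  ring

lemma qBesselOp_const_mul (c : ℝ) (f : ℝ → ℝ) (x : ℝ) :
    qBesselOp q ν (fun x => c * f x) x = c * qBesselOp q ν f x := by
  simp only [qBesselOp]; ring

lemma exists_rpow_mul_exp_neg_le (a : ℝ) {s : ℝ} (hs : 0 < s) :
    ∃ C, ∀ y, 1 ≤ y → y ^ a * Real.exp (-s * y ^ 2) ≤ C * y⁻¹ := by
  set N := ⌈a⌉₊
  refine ⟨(N + 1) ! / s ^ (N + 1), fun y hy => ?_⟩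
  have hy₀ : 0 < y := one_pos.trans_le hy
  have hexp : Real.exp (-s * y ^ 2) ≤ (N + 1) ! / (s * y ^ 2) ^ (N + 1) := by
    rw [neg_mul, Real.exp_neg, ← inv_div]
    exact inv_anti₀ (by positivity) (Real.pow_div_factorial_le_exp _ (by positivity) _)
  have hpow : y ^ a ≤ y ^ N := by
    rw [← Real.rpow_natCast]; exact Real.rpow_le_rpow_of_exponent_le hy (Nat.le_ceil a)
  calc y ^ a * Real.exp (-s * y ^ 2) ≤ y ^ N * ((N + 1) ! / (s * y ^ 2) ^ (N + 1)) := by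
        gcongr
    _ = (N + 1) ! / s ^ (N + 1) * (y ^ (N + 1) / (y ^ 2) ^ (N + 1)) * y⁻¹ := by
        field_simp; ring
    _ ≤ (N + 1) ! / s ^ (N + 1) * 1 * y⁻¹ := by
        gcongr
        exact div_le_one_of_le₀ (pow_le_pow_left₀ hy₀.le (by nlinarith) _) (by positivity)
    _ = (N + 1) ! / s ^ (N + 1) * y⁻¹ := by ring

lemma summable_rpow_mul_exp_neg_sq (hq : 0 < q) (hq1 : q < 1) {a s : ℝ} (ha : 0 < a)
    (hs : 0 < s) : Summable fun n : ℤ => (q ^ n) ^ a * Real.exp (-s * (q ^ n) ^ 2) := by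
  refine .of_nat_of_neg ?_ ?_
  · refine .of_nonneg_of_le (fun k => by positivity) (fun k => ?_)
      (summable_geometric_of_lt_one (Real.rpow_nonneg hq.le a) (Real.rpow_lt_one hq.le hq1 ha))
    rw [zpow_natCast, ← Real.rpow_pow_comm hq.le]
    exact mul_le_of_le_one_right (by positivity)
      (Real.exp_le_one_iff.2 (by nlinarith [sq_nonneg (q ^ k)]))
  · obtain ⟨C, hC⟩ := exists_rpow_mul_exp_neg_le a hs
    refine .of_nonneg_of_le (fun k => by positivity) (fun k => ?_)
      ((summable_geometric_of_lt_one hq.le hq1).mul_left C)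
    simpa [zpow_neg] using hC _ (one_le_zpow_of_nonpos₀ hq hq1.le (by omega : -(k : ℤ) ≤ 0))

lemma one_sub_le_one_sub_mul_pow {a Q : ℝ} (ha : 0 ≤ a) (hQ₀ : 0 ≤ Q) (hQ₁ : Q ≤ 1) (k : ℕ) :
    1 - a ≤ 1 - a * Q ^ k := by
  linarith [mul_le_of_le_one_right ha (pow_le_one₀ hQ₀ hQ₁ (n := k))]

lemma rpow_two_mul_add_two_lt_one (hq : 0 < q) (hq1 : q < 1) (hν : -1 < ν) :
    q ^ (2 * ν + 2) < 1 :=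
  Real.rpow_lt_one hq.le hq1 (by linarith)

def jnuCoeff (q ν : ℝ) (k : ℕ) : ℝ :=
  (-1) ^ k * q ^ (k * (k + 1)) /
    (qPochFin (q ^ (2 * ν + 2)) (q ^ 2) k * qPochFin (q ^ 2) (q ^ 2) k)

lemma jnu_eq_tsum (q ν x : ℝ) : jnu q ν x = ∑' k, jnuCoeff q ν k * x ^ (2 * k) :=
  tsum_congr fun k => by rw [jnuCoeff, div_mul_eq_mul_div]

lemma jnuCoeff_succ (q ν : ℝ) (k : ℕ) :
    jnuCoeff q ν (k + 1) = -jnuCoeff q ν k * q ^ (2 * k + 2) /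
      ((1 - q ^ (2 * ν + 2) * (q ^ 2) ^ k) * (1 - q ^ 2 * (q ^ 2) ^ k)) := by
  simp only [jnuCoeff, qPochFin, Finset.prod_range_succ, div_eq_mul_inv, mul_inv]
  ring

lemma abs_jnuCoeff_succ_le (hq : 0 < q) (hq1 : q < 1) (hν : -1 < ν) (k : ℕ) :
    |jnuCoeff q ν (k + 1)| ≤
      q ^ (2 * k + 2) / ((1 - q ^ (2 * ν + 2)) * (1 - q ^ 2)) * |jnuCoeff q ν k| := by
  have hα := one_sub_le_one_sub_mul_pow (Real.rpow_nonneg hq.le (2 * ν + 2)) (sq_nonneg q)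
    (pow_lt_one₀ hq.le hq1 two_ne_zero).le k
  have hQ := one_sub_le_one_sub_mul_pow (sq_nonneg q) (sq_nonneg q)
    (pow_lt_one₀ hq.le hq1 two_ne_zero).le k
  have hα₀ : 0 < 1 - q ^ (2 * ν + 2) := by linarith [rpow_two_mul_add_two_lt_one hq hq1 hν]
  have hQ₀ : 0 < 1 - q ^ 2 := by linarith [pow_lt_one₀ hq.le hq1 two_ne_zero]
  rw [jnuCoeff_succ, abs_div, abs_mul, abs_neg,
    abs_of_pos (by positivity : 0 < q ^ (2 * k + 2)),
    abs_of_pos (mul_pos (hα₀.trans_le hα) (hQ₀.trans_le hQ))]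
  calc _ ≤ |jnuCoeff q ν k| * q ^ (2 * k + 2) / ((1 - q ^ (2 * ν + 2)) * (1 - q ^ 2)) :=
        div_le_div_of_nonneg_left (by positivity) (by positivity)
          (mul_le_mul hα hQ hQ₀.le (by linarith))
    _ = _ := by ring

-- Ratio test for `|a_k| k! / ε^k`, whose successive ratios are `O(k q^{2k})`.
lemma exists_abs_jnuCoeff_le (hq : 0 < q) (hq1 : q < 1) (hν : -1 < ν) {ε : ℝ} (hε : 0 < ε) :
    ∃ D, ∀ k, |jnuCoeff q ν k| ≤ D * ε ^ k / k ! := by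
  set d := (1 - q ^ (2 * ν + 2)) * (1 - q ^ 2)
  have hd : 0 < d := mul_pos (by linarith [rpow_two_mul_add_two_lt_one hq hq1 hν])
    (by linarith [pow_lt_one₀ hq.le hq1 two_ne_zero])
  set b : ℕ → ℝ := fun k => |jnuCoeff q ν k| * k ! / ε ^ k
  have hratio :
      Tendsto (fun k : ℕ => ((k + 1 : ℕ) : ℝ) * (q ^ 2) ^ (k + 1) / (d * ε)) atTop (𝓝 0) := by
    simpa using ((tendsto_self_mul_const_pow_of_lt_one (sq_nonneg q)
      (pow_lt_one₀ hq.le hq1 two_ne_zero)).comp (tendsto_add_atTop_nat 1)).div_const (d * ε)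
  have hb : Summable b := by
    refine summable_of_ratio_norm_eventually_le one_half_lt_one ?_
    filter_upwards [hratio.eventually_le_const one_half_pos] with k hk
    rw [Real.norm_of_nonneg (by positivity), Real.norm_of_nonneg (by positivity)]
    calc b (k + 1) = |jnuCoeff q ν (k + 1)| * (k + 1) ! / ε ^ (k + 1) := rfl
      _ ≤ q ^ (2 * k + 2) / d * |jnuCoeff q ν k| * (k + 1) ! / ε ^ (k + 1) := by
          gcongr; exact abs_jnuCoeff_succ_le hq hq1 hν k
      _ = ((k + 1 : ℕ) : ℝ) * (q ^ 2) ^ (k + 1) / (d * ε) * b k := by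
          simp only [b, factorial_succ, pow_succ]; push_cast; field_simp; ring
      _ ≤ 1 / 2 * b k := mul_le_mul_of_nonneg_right hk (by positivity)
  obtain ⟨D, hD⟩ := hb.tendsto_atTop_zero.bddAbove_range
  refine ⟨D, fun k => ?_⟩
  have hbk : b k ≤ D := hD (Set.mem_range_self k)
  rw [le_div_iff₀ (by positivity)]
  calc |jnuCoeff q ν k| * k ! = b k * ε ^ k := by simp only [b]; field_simp
    _ ≤ D * ε ^ k := by gcongr

lemma norm_jnuCoeff_mul_pow_le {D ε : ℝ} (hD : ∀ k, |jnuCoeff q ν k| ≤ D * ε ^ k / k !)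
    (x : ℝ) (k : ℕ) : ‖jnuCoeff q ν k * x ^ (2 * k)‖ ≤ D * ((ε * x ^ 2) ^ k / k !) :=
  calc ‖jnuCoeff q ν k * x ^ (2 * k)‖ = |jnuCoeff q ν k| * (x ^ 2) ^ k := by
        rw [Real.norm_eq_abs, abs_mul, pow_mul, abs_of_nonneg (by positivity : 0 ≤ (x ^ 2) ^ k)]
    _ ≤ D * ε ^ k / k ! * (x ^ 2) ^ k := by gcongr; exact hD k
    _ = D * ((ε * x ^ 2) ^ k / k !) := by ring

lemma summable_jnuCoeff_mul_pow (hq : 0 < q) (hq1 : q < 1) (hν : -1 < ν) (x : ℝ) :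
    Summable fun k => jnuCoeff q ν k * x ^ (2 * k) := by
  obtain ⟨D, hD⟩ := exists_abs_jnuCoeff_le hq hq1 hν one_pos
  exact .of_norm_bounded ((Real.summable_pow_div_factorial _).mul_left D)
    (norm_jnuCoeff_mul_pow_le hD x)

lemma exists_abs_jnu_le_mul_exp (hq : 0 < q) (hq1 : q < 1) (hν : -1 < ν) {ε : ℝ}
    (hε : 0 < ε) : ∃ C, ∀ x, |jnu q ν x| ≤ C * Real.exp (ε * x ^ 2) := by
  obtain ⟨D, hD⟩ := exists_abs_jnuCoeff_le hq hq1 hν hε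
  refine ⟨D, fun x => ?_⟩
  have hexp : HasSum (fun k => (ε * x ^ 2) ^ k / k !) (Real.exp (ε * x ^ 2)) := by
    rw [Real.exp_eq_exp_ℝ]; exact NormedSpace.expSeries_div_hasSum_exp _
  rw [jnu_eq_tsum, ← Real.norm_eq_abs]
  exact tsum_of_norm_bounded (hexp.mul_left D) (norm_jnuCoeff_mul_pow_le hD x)

lemma jnuCoeff_succ_mul (hq : 0 < q) (hq1 : q < 1) (hν : -1 < ν) (k : ℕ) :
    jnuCoeff q ν (k + 1) *
        ((q ^ (2 * k + 2))⁻¹ - (1 + q ^ (2 * ν)) + q ^ (2 * ν) * q ^ (2 * k + 2))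
      = -jnuCoeff q ν k := by
  have hα : 1 - q ^ (2 * ν + 2) * (q ^ 2) ^ k ≠ 0 := by
    linarith [rpow_two_mul_add_two_lt_one hq hq1 hν, one_sub_le_one_sub_mul_pow
      (Real.rpow_nonneg hq.le (2 * ν + 2)) (sq_nonneg q)
      (pow_lt_one₀ hq.le hq1 two_ne_zero).le k]
  have hQ : 1 - q ^ 2 * (q ^ 2) ^ k ≠ 0 := by
    linarith [pow_lt_one₀ hq.le hq1 two_ne_zero, one_sub_le_one_sub_mul_pow
      (sq_nonneg q) (sq_nonneg q) (pow_lt_one₀ hq.le hq1 two_ne_zero).le k]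
  have hsplit : q ^ (2 * ν + 2) = q ^ (2 * ν) * q ^ 2 := by
    rw [Real.rpow_add hq, Real.rpow_two]
  rw [jnuCoeff_succ]
  rw [hsplit] at hα ⊢
  field_simp
  ring

lemma jnu_div_sub_add_mul (hq : 0 < q) (hq1 : q < 1) (hν : -1 < ν) (z : ℝ) :
    jnu q ν (z / q) - (1 + q ^ (2 * ν)) * jnu q ν z + q ^ (2 * ν) * jnu q ν (q * z)
      = -z ^ 2 * jnu q ν z := by
  have hs : ∀ w, HasSum (fun k => jnuCoeff q ν k * w ^ (2 * k)) (jnu q ν w) := fun w => by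
    rw [jnu_eq_tsum]; exact (summable_jnuCoeff_mul_pow hq hq1 hν w).hasSum
  have hcomb := (((hs (z / q)).sub ((hs z).mul_left (1 + q ^ (2 * ν)))).add
    ((hs (q * z)).mul_left (q ^ (2 * ν))))
  rw [← hasSum_nat_add_iff' 1, Finset.sum_range_one] at hcomb
  have key := hcomb.unique (((hs z).mul_left (-z ^ 2)).congr_fun fun k => ?_)
  · linear_combination key
  · linear_combination z ^ (2 * k + 2) * jnuCoeff_succ_mul hq hq1 hν k

lemma qBesselOp_jnu_mul (hq : 0 < q) (hq1 : q < 1) (hν : -1 < ν) {x : ℝ} (hx : x ≠ 0)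
    (y : ℝ) : qBesselOp q ν (fun x => jnu q ν (x * y)) x = -y ^ 2 * jnu q ν (x * y) := by
  simp only [qBesselOp]
  rw [div_mul_eq_mul_div, mul_assoc q x y, jnu_div_sub_add_mul hq hq1 hν (x * y)]
  field_simp

def heatIntegrand (q ν xr x t y : ℝ) : ℝ :=
  Real.exp (-t * y ^ 2) * jnu q ν (x * y) * jnu q ν (xr * y) * y ^ (2 * ν + 1)

lemma hasDerivAt_heatIntegrand (q ν xr x y s : ℝ) :
    HasDerivAt (fun s => heatIntegrand q ν xr x s y)
      (-y ^ 2 * heatIntegrand q ν xr x s y) s := by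
  refine ((((hasDerivAt_neg s).mul_const (y ^ 2)).exp.mul_const (jnu q ν (x * y))).mul_const
    (jnu q ν (xr * y))).mul_const (y ^ (2 * ν + 1)) |>.congr_deriv ?_
  rw [heatIntegrand]; ring

lemma qBesselOp_heatIntegrand (hq : 0 < q) (hq1 : q < 1) (hν : -1 < ν) (xr : ℝ) {x : ℝ}
    (hx : x ≠ 0) (t y : ℝ) :
    qBesselOp q ν (fun x => heatIntegrand q ν xr x t y) x
      = -y ^ 2 * heatIntegrand q ν xr x t y := by
  have hfun : (fun x => heatIntegrand q ν xr x t y)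
      = fun x => Real.exp (-t * y ^ 2) * jnu q ν (xr * y) * y ^ (2 * ν + 1) * jnu q ν (x * y) :=
    funext fun x => by rw [heatIntegrand]; ring
  rw [hfun, qBesselOp_const_mul, qBesselOp_jnu_mul hq hq1 hν hx, heatIntegrand]
  ring

lemma exists_abs_jnu_mul_le (hq : 0 < q) (hq1 : q < 1) (hν : -1 < ν) (x : ℝ) {δ : ℝ}
    (hδ : 0 < δ) : ∃ C, 0 ≤ C ∧ ∀ y, |jnu q ν (x * y)| ≤ C * Real.exp (δ * y ^ 2) := by
  obtain ⟨C, hC⟩ := exists_abs_jnu_le_mul_exp hq hq1 hν (ε := δ / (x ^ 2 + 1)) (by positivity)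
  have hC₀ : 0 ≤ C := by simpa using (abs_nonneg _).trans (hC 0)
  refine ⟨C, hC₀, fun y => (hC (x * y)).trans ?_⟩
  rw [mul_pow, ← mul_assoc]
  gcongr
  calc δ / (x ^ 2 + 1) * x ^ 2 ≤ δ / (x ^ 2 + 1) * (x ^ 2 + 1) := by gcongr; linarith
    _ = δ := div_mul_cancel₀ δ (by positivity)

lemma exists_summable_bound_heatIntegrand (hq : 0 < q) (hq1 : q < 1) (hν : -1 < ν)
    (xr x : ℝ) {s₀ : ℝ} (hs₀ : 0 < s₀) (k : ℕ) :
    ∃ u : ℤ → ℝ, Summable u ∧ ∀ n s, s₀ ≤ s →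
      |(q ^ n) ^ k * (q ^ n * heatIntegrand q ν xr x s (q ^ n))| ≤ u n := by
  obtain ⟨C₁, hC₁, h₁⟩ := exists_abs_jnu_mul_le hq hq1 hν x (δ := s₀ / 4) (by positivity)
  obtain ⟨C₂, hC₂, h₂⟩ := exists_abs_jnu_mul_le hq hq1 hν xr (δ := s₀ / 4) (by positivity)
  set a : ℝ := (k + 1 : ℕ) + (2 * ν + 1) with ha_def
  have ha : 0 < a := by have : (0 : ℝ) ≤ k := k.cast_nonneg; push_cast [a]; linarith
  refine ⟨fun n => C₁ * C₂ * ((q ^ n) ^ a * Real.exp (-(s₀ / 2) * (q ^ n) ^ 2)),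
    (summable_rpow_mul_exp_neg_sq hq hq1 ha (by positivity)).mul_left _,
    fun n s hs => ?_⟩
  set y := q ^ n
  have hy : 0 < y := zpow_pos hq n
  have hrpow : y ^ k * (y * y ^ (2 * ν + 1)) = y ^ a := by
    rw [ha_def, Real.rpow_add hy ((k + 1 : ℕ) : ℝ), Real.rpow_natCast]
    ring
  have hexp : Real.exp (-(s₀ / 2) * y ^ 2)
      = Real.exp (-s₀ * y ^ 2) * Real.exp (s₀ / 4 * y ^ 2) * Real.exp (s₀ / 4 * y ^ 2) := by
    rw [← Real.exp_add, ← Real.exp_add]; ring_nf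
  have hsplit : y ^ k * (y * heatIntegrand q ν xr x s y)
      = y ^ a * Real.exp (-s * y ^ 2) * (jnu q ν (x * y) * jnu q ν (xr * y)) := by
    rw [← hrpow, heatIntegrand]; ring
  calc |y ^ k * (y * heatIntegrand q ν xr x s y)|
      = y ^ a * Real.exp (-s * y ^ 2) * (|jnu q ν (x * y)| * |jnu q ν (xr * y)|) := by
        rw [hsplit, abs_mul, abs_mul, abs_mul, abs_of_pos (Real.rpow_pos_of_pos hy a),
          abs_of_pos (Real.exp_pos _)]
    _ ≤ y ^ a * Real.exp (-s₀ * y ^ 2) *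
          (C₁ * Real.exp (s₀ / 4 * y ^ 2) * (C₂ * Real.exp (s₀ / 4 * y ^ 2))) := by
        gcongr
        · exact h₁ y
        · exact h₂ y
    _ = C₁ * C₂ * (y ^ a * Real.exp (-(s₀ / 2) * y ^ 2)) := by rw [hexp]; ring

lemma summable_heatIntegrand (hq : 0 < q) (hq1 : q < 1) (hν : -1 < ν) (xr x : ℝ) {t : ℝ}
    (ht : 0 < t) : Summable fun n : ℤ => q ^ n * heatIntegrand q ν xr x t (q ^ n) := by
  obtain ⟨u, hu, hbound⟩ := exists_summable_bound_heatIntegrand hq hq1 hν xr x ht 0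
  exact .of_norm_bounded hu fun n => by simpa using hbound n t le_rfl

lemma hasDerivAt_qInt_heatIntegrand (hq : 0 < q) (hq1 : q < 1) (hν : -1 < ν) (xr x : ℝ)
    {t : ℝ} (ht : 0 < t) :
    HasDerivAt (fun s => qInt q (heatIntegrand q ν xr x s))
      (qInt q fun y => -y ^ 2 * heatIntegrand q ν xr x t y) t := by
  obtain ⟨u, hu, hbound⟩ := exists_summable_bound_heatIntegrand hq hq1 hν xr x (half_pos ht) 2
  refine hasDerivAt_qInt (F' := fun s y => -y ^ 2 * heatIntegrand q ν xr x s y) isOpen_Ioi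
    isPreconnected_Ioi (half_lt_self ht) (fun n s _ => hasDerivAt_heatIntegrand q ν xr x _ s) hu
    (fun n s hs => ?_) (summable_heatIntegrand hq hq1 hν xr x ht)
  calc |q ^ n * (-(q ^ n) ^ 2 * heatIntegrand q ν xr x s (q ^ n))|
      = |(q ^ n) ^ 2 * (q ^ n * heatIntegrand q ν xr x s (q ^ n))| := by rw [← abs_neg]; ring_nf
    _ ≤ u n := hbound n s (le_of_lt hs)

lemma qBesselOp_qInt_heatIntegrand (hq : 0 < q) (hq1 : q < 1) (hν : -1 < ν) (xr : ℝ) {x : ℝ}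
    (hx : x ≠ 0) {t : ℝ} (ht : 0 < t) :
    qBesselOp q ν (fun x => qInt q (heatIntegrand q ν xr x t)) x
      = qInt q fun y => -y ^ 2 * heatIntegrand q ν xr x t y := by
  have h := summable_heatIntegrand hq hq1 hν xr (t := t)
  rw [qBesselOp_qInt (F := fun x => heatIntegrand q ν xr x t) (h _ ht) (h _ ht) (h _ ht)]
  simp only [qBesselOp_heatIntegrand hq hq1 hν xr hx]

theorem q_fokker_planck_general (q ν xr : ℝ) (hq : 0 < q) (hq1 : q < 1) (hν : -1 < ν)
    (P : ℝ → ℝ → ℝ)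
    (hP : ∀ x t, P x t = (cq q ν) ^ 2 * qInt q (fun y =>
      Real.exp (-t * y ^ 2) * jnu q ν (x * y) * jnu q ν (xr * y) * y ^ (2 * ν + 1)))
    (t : ℝ) (ht : 0 < t) (n : ℤ) :
    HasDerivAt (fun s => P (q ^ n) s) (qBesselOp q ν (fun x => P x t) (q ^ n)) t := by
  obtain rfl : P = fun x s => cq q ν ^ 2 * qInt q (heatIntegrand q ν xr x s) :=
    funext₂ hP
  rw [qBesselOp_const_mul, qBesselOp_qInt_heatIntegrand hq hq1 hν xr (zpow_pos hq n).ne' ht]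
  exact (hasDerivAt_qInt_heatIntegrand hq hq1 hν xr _ ht).const_mul _

theorem q_fokker_planck (q ν xr : ℝ) (hq : 0 < q) (hq1 : q < 1) (hν : -1 < ν)
    (hxr : ∃ r : ℤ, xr = q ^ r)
    (P : ℝ → ℝ → ℝ)
    (hP : ∀ x t, P x t = (cq q ν) ^ 2 * qInt q (fun y =>
      Real.exp (-t * y ^ 2) * jnu q ν (x * y) * jnu q ν (xr * y) * y ^ (2 * ν + 1)))
    (t : ℝ) (ht : 0 < t) (n : ℤ) :
    HasDerivAt (fun s => P (q ^ n) s) (qBesselOp q ν (fun x => P x t) (q ^ n)) t :=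
  q_fokker_planck_general q ν xr hq hq1 hν P hP t ht n
end
end

section
/- The q-Bessel operator Δ_{q,ν} is symmetric with respect to the measure x^{2ν+1} d_q x: for suitable functions f, g on R_q (e.g., with finite support), ⟨Δ_{q,ν} f, g⟩_{q,ν} = ⟨f, Δ_{q,ν} g⟩_{q,ν}. -/
open scoped BigOperators
noncomputable section

/-- Weight `q^(2νn)` appearing in the symmetry computation. -/
private def W (q ν : ℝ) (n : ℤ) : ℝ := q ^ (2 * ν * (n : ℝ))

private lemma Wadd (q ν : ℝ) (hq : 0 < q) (n : ℤ) :
    W q ν (n + 1) = W q ν n * q ^ (2 * ν) := by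
  unfold W
  rw [← Real.rpow_add hq]
  congr 1
  push_cast
  ring

private lemma Wkey (q ν : ℝ) (hq : 0 < q) (n : ℤ) :
    (q : ℝ) ^ n * ((q : ℝ) ^ n) ^ (2 * ν + 1) / ((q : ℝ) ^ n) ^ 2 = W q ν n := by
  have e : ((q : ℝ) ^ n) = q ^ ((n : ℤ) : ℝ) := (Real.rpow_intCast q n).symm
  rw [e, ← Real.rpow_natCast (q ^ ((n : ℤ) : ℝ)) 2,
    ← Real.rpow_mul hq.le, ← Real.rpow_mul hq.le, ← Real.rpow_add hq,
    ← Real.rpow_sub hq]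
  unfold W
  congr 1
  push_cast
  ring

theorem qBesselOp_symmetric (q ν : ℝ) (hq : 0 < q) (hq1 : q < 1) (hν : -1 < ν)
    (f g : ℝ → ℝ)
    (hf : {n : ℤ | f (q ^ n) ≠ 0}.Finite) (hg : {n : ℤ | g (q ^ n) ≠ 0}.Finite) :
    qInner q ν (qBesselOp q ν f) g = qInner q ν f (qBesselOp q ν g) := by
  classical
  have hq0 : q ≠ 0 := ne_of_gt hq
  set c : ℝ := q ^ (2 * ν) with hc
  have h1 : ∀ n : ℤ, (q : ℝ) ^ n / q = q ^ (n - 1) := by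
    intro n
    rw [zpow_sub_one₀ hq0, div_eq_mul_inv]
  have h2 : ∀ n : ℤ, q * (q : ℝ) ^ n = q ^ (n + 1) := by
    intro n
    rw [zpow_add_one₀ hq0, mul_comm]
  have hterm : ∀ n : ℤ,
      (q : ℝ) ^ n * (qBesselOp q ν f ((q : ℝ) ^ n) * g ((q : ℝ) ^ n)
        * ((q : ℝ) ^ n) ^ (2 * ν + 1)) =
      (W q ν n * f ((q : ℝ) ^ (n - 1))) * g ((q : ℝ) ^ n)
        - (1 + c) * ((W q ν n * f ((q : ℝ) ^ n)) * g ((q : ℝ) ^ n))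
        + c * ((W q ν n * f ((q : ℝ) ^ (n + 1))) * g ((q : ℝ) ^ n)) := by
    intro n
    simp only [qBesselOp, h1 n, h2 n, ← Wkey q ν hq n, hc]
    ring
  have hterm2 : ∀ n : ℤ,
      (q : ℝ) ^ n * (f ((q : ℝ) ^ n) * qBesselOp q ν g ((q : ℝ) ^ n)
        * ((q : ℝ) ^ n) ^ (2 * ν + 1)) =
      (W q ν n * f ((q : ℝ) ^ n)) * g ((q : ℝ) ^ (n - 1))
        - (1 + c) * ((W q ν n * f ((q : ℝ) ^ n)) * g ((q : ℝ) ^ n))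
        + c * ((W q ν n * f ((q : ℝ) ^ n)) * g ((q : ℝ) ^ (n + 1))) := by
    intro n
    simp only [qBesselOp, h1 n, h2 n, ← Wkey q ν hq n, hc]
    ring
  have hb0 : ∀ n ∉ hg.toFinset, g ((q : ℝ) ^ n) = 0 := by
    intro n hn
    by_contra h
    exact hn (hg.mem_toFinset.mpr h)
  have hf0 : ∀ n ∉ hf.toFinset, f ((q : ℝ) ^ n) = 0 := by
    intro n hn
    by_contra h
    exact hn (hf.mem_toFinset.mpr h)
  have hsg : ∀ F : ℤ → ℝ, (∀ n, g ((q : ℝ) ^ n) = 0 → F n = 0) → Summable F := by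
    intro F h
    exact summable_of_ne_finset_zero (s := hg.toFinset) fun n hn => h n (hb0 n hn)
  have hsf : ∀ F : ℤ → ℝ, (∀ n, f ((q : ℝ) ^ n) = 0 → F n = 0) → Summable F := by
    intro F h
    exact summable_of_ne_finset_zero (s := hf.toFinset) fun n hn => h n (hf0 n hn)
  simp only [qInner, qInt]
  congr 1
  rw [tsum_congr hterm, tsum_congr hterm2]
  -- summability of the pieces
  have hA : Summable (fun n : ℤ => (W q ν n * f ((q : ℝ) ^ (n - 1))) * g ((q : ℝ) ^ n)) :=
    hsg _ (fun n h0 => by rw [h0, mul_zero])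
  have hB : Summable (fun n : ℤ =>
      (1 + c) * ((W q ν n * f ((q : ℝ) ^ n)) * g ((q : ℝ) ^ n))) :=
    hsg _ (fun n h0 => by rw [h0, mul_zero, mul_zero])
  have hC : Summable (fun n : ℤ => c * ((W q ν n * f ((q : ℝ) ^ (n + 1))) * g ((q : ℝ) ^ n))) :=
    hsg _ (fun n h0 => by rw [h0, mul_zero, mul_zero])
  have hA2 : Summable (fun n : ℤ => (W q ν n * f ((q : ℝ) ^ n)) * g ((q : ℝ) ^ (n - 1))) :=
    hsf _ (fun n h0 => by rw [h0, mul_zero, zero_mul])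
  have hC2 : Summable (fun n : ℤ =>
      c * ((W q ν n * f ((q : ℝ) ^ n)) * g ((q : ℝ) ^ (n + 1)))) :=
    hsf _ (fun n h0 => by rw [h0, mul_zero, zero_mul, mul_zero])
  rw [Summable.tsum_add (hA.sub hB) hC, Summable.tsum_sub hA hB,
    Summable.tsum_add (hA2.sub hB) hC2, Summable.tsum_sub hA2 hB]
  -- shift identities
  have shift1 : (∑' n : ℤ, (W q ν n * f ((q : ℝ) ^ (n - 1))) * g ((q : ℝ) ^ n)) =
      ∑' n : ℤ, c * ((W q ν n * f ((q : ℝ) ^ n)) * g ((q : ℝ) ^ (n + 1))) := by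
    rw [← Equiv.tsum_eq (Equiv.addRight (1 : ℤ))
      (fun n : ℤ => (W q ν n * f ((q : ℝ) ^ (n - 1))) * g ((q : ℝ) ^ n))]
    apply tsum_congr
    intro m
    simp only [Equiv.coe_addRight, add_sub_cancel_right, Wadd q ν hq m, ← hc]
    ring
  have shift2 : (∑' n : ℤ, c * ((W q ν n * f ((q : ℝ) ^ (n + 1))) * g ((q : ℝ) ^ n))) =
      ∑' n : ℤ, (W q ν n * f ((q : ℝ) ^ n)) * g ((q : ℝ) ^ (n - 1)) := by
    rw [← Equiv.tsum_eq (Equiv.subRight (1 : ℤ))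
      (fun n : ℤ => c * ((W q ν n * f ((q : ℝ) ^ (n + 1))) * g ((q : ℝ) ^ n)))]
    apply tsum_congr
    intro m
    have hw : W q ν (m - 1) * q ^ (2 * ν) = W q ν m := by
      have := Wadd q ν hq (m - 1)
      rw [sub_add_cancel] at this
      exact this.symm
    simp only [Equiv.subRight_apply, sub_add_cancel]
    rw [← hw, ← hc]
    ring
  rw [shift1, shift2]
  ring
end
end
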